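/- For M, N positive integers, the map is well-defined and bijective: i ↦ ((i mod M), ⌊i/M⌋) is a bijection from {0,…,MN−1} to {0,…,M−1} × {0,…,N−1}, and under this bijection the Zak-OTFS basis φ_i and the ODDM basis coincide as functions on ℤ_{MN}, hence the change-of-basis matrix between the ODDM and Zak-OTFS bases is the identity matrix (in particular, unitary and carrier-index-preserving). -/

import Mathlib

open Complex Finset

/-- The Zak-OTFS pulsone on `Z_{MN}` (sum over all integers `d`). -/
noncomputable def pulsone (M N : ℕ) (i n : ℕ) : ℂ :=
  (1 / Real.sqrt N) *
    ∑' d : ℤ, Complex.exp (2 * Real.pi * Complex.I * (d * (i / M : ℕ)) / N) *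
      (if (n : ℤ) - ((i : ℤ) % (M : ℤ)) - d * M = 0 then 1 else 0)

/-- The ODDM basis element on `Z_{MN}`. -/
noncomputable def oddmBasis (M N : ℕ) (i n : ℕ) : ℂ :=
  if n % M = i % M then
    (1 / Real.sqrt N) *
      Complex.exp (2 * Real.pi * Complex.I * ((i / M : ℕ) * (n / M : ℕ) : ℕ) / N)
  else 0

/-!
On `ℤ_{MN}` both bases are supported on the residue class of `i` modulo `M`, and on that class
the lattice sum defining the pulsone has exactly one nonzero term, `d = ⌊n/M⌋`, whose phase is
the ODDM phase; so the two bases agree pointwise. Writing `n = r + M q` with `r = n mod M`,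
`q = ⌊n/M⌋`, the Gram sum of the ODDM basis splits into the disjointness of residue classes
(the sum over `r`) and the orthogonality of the powers of a primitive `N`-th root of unity
(the sum over `q`).
-/

open ComplexConjugate

theorem bijOn_mod_div {M : ℕ} (hM : 0 < M) (N : ℕ) :
    Set.BijOn (fun i : ℕ => (i % M, i / M)) (Set.Iio (M * N)) (Set.Iio M ×ˢ Set.Iio N) := by
  refine Set.InvOn.bijOn (f' := fun p : ℕ × ℕ => p.1 + M * p.2) ⟨?_, ?_⟩ ?_ ?_
  · intro i _
    exact Nat.mod_add_div i M
  · rintro ⟨r, q⟩ ⟨hr, -⟩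
    simp only [Set.mem_Iio] at hr
    simp [Nat.add_mul_div_left _ _ hM, Nat.div_eq_of_lt hr, Nat.mod_eq_of_lt hr]
  · intro i hi
    simp only [Set.mem_Iio, Set.mem_prod] at hi ⊢
    exact ⟨Nat.mod_lt i hM, Nat.div_lt_of_lt_mul hi⟩
  · rintro ⟨r, q⟩ ⟨hr, hq⟩
    simp only [Set.mem_Iio] at hr hq ⊢
    nlinarith

theorem sum_range_mul_eq_sum_mod_div {β : Type*} [AddCommMonoid β] {M : ℕ} (hM : 0 < M) (N : ℕ)
    (f : ℕ → ℕ → β) :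
    ∑ n ∈ range (M * N), f (n % M) (n / M) = ∑ r ∈ range M, ∑ q ∈ range N, f r q := by
  have h := bijOn_mod_div hM N
  rw [← coe_range, ← coe_range, ← coe_range, ← coe_product] at h
  rw [← sum_product']
  exact sum_nbij _ (fun n hn => h.mapsTo hn) h.injOn h.surjOn fun _ _ => rfl

theorem pulsone_eq_oddmBasis {M : ℕ} (hM : 0 < M) (N i n : ℕ) :
    pulsone M N i n = oddmBasis M N i n := by
  have hM' : (0 : ℤ) < M := by exact_mod_cast hM
  have hlattice : ∀ d : ℤ,
      (n : ℤ) - (i : ℤ) % M - d * M = 0 ↔ d = (n / M : ℕ) ∧ n % M = i % M := by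
    intro d
    have h := Int.ediv_emod_unique (a := n) (r := (i : ℤ) % M) (q := d) hM'
    have h0 := Int.emod_nonneg (i : ℤ) hM'.ne'
    have h1 := Int.emod_lt_of_pos (i : ℤ) hM'
    rw [← Int.natCast_inj, Int.natCast_mod, Int.natCast_mod, Int.natCast_div, eq_comm (a := d), h]
    exact ⟨fun h => ⟨by linarith, h0, h1⟩, fun h => by linarith [h.1]⟩
  unfold pulsone oddmBasis
  simp_rw [hlattice]
  by_cases h : n % M = i % M
  · simp only [h, and_true, mul_ite, mul_one, mul_zero, if_true]
    rw [tsum_ite_eq, Int.cast_natCast, Nat.cast_mul]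
    ring_nf
  · simp [h]

theorem IsPrimitiveRoot.sum_range_pow_mul_inv_pow {K : Type*} [Field K] {ζ : K} {N : ℕ}
    (hζ : IsPrimitiveRoot ζ N) {a b : ℕ} (ha : a < N) (hb : b < N) :
    ∑ q ∈ range N, ζ ^ (a * q) * (ζ ^ (b * q))⁻¹ = if a = b then (N : K) else 0 := by
  have hζ0 : ζ ≠ 0 := hζ.ne_zero (by omega)
  have hgeom : ∀ q, ζ ^ (a * q) * (ζ ^ (b * q))⁻¹ = (ζ ^ a * (ζ ^ b)⁻¹) ^ q := fun q => by
    rw [mul_pow, inv_pow, ← pow_mul, ← pow_mul]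
  simp_rw [hgeom]
  split_ifs with hab
  · simp [hab, hζ0]
  · have hne : ζ ^ a * (ζ ^ b)⁻¹ ≠ 1 := by
      rw [Ne, mul_inv_eq_one₀ (pow_ne_zero b hζ0)]
      exact fun h => hab (hζ.pow_inj ha hb h)
    rw [geom_sum_eq hne, ← hgeom, mul_comm a, mul_comm b, pow_mul, pow_mul, hζ.pow_eq_one]
    simp

theorem exp_two_pi_I_mul_natCast_div (N m : ℕ) :
    exp (2 * Real.pi * I * (m : ℂ) / N) = exp (2 * Real.pi * I / N) ^ m := by
  rw [← exp_nat_mul]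
  ring_nf

theorem conj_exp_two_pi_I_div (N : ℕ) :
    conj (exp (2 * Real.pi * I / N)) = (exp (2 * Real.pi * I / N))⁻¹ := by
  rw [← exp_conj, ← exp_neg]
  simp [map_div₀, map_ofNat, neg_div]

theorem oddmBasis_eq_ite_pow (M N i n : ℕ) :
    oddmBasis M N i n = if n % M = i % M then
      (1 / Real.sqrt N : ℂ) * exp (2 * Real.pi * I / N) ^ (i / M * (n / M)) else 0 := by
  rw [oddmBasis, exp_two_pi_I_mul_natCast_div]

theorem sum_oddmBasis_mul_conj_oddmBasis {M N : ℕ} (hM : 0 < M) (hN : 0 < N) {i j : ℕ}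
    (hi : i < M * N) (hj : j < M * N) :
    ∑ n ∈ range (M * N), oddmBasis M N i n * conj (oddmBasis M N j n) =
      if i = j then 1 else 0 := by
  set ζ := exp (2 * Real.pi * I / N)
  have hζ : IsPrimitiveRoot ζ N := isPrimitiveRoot_exp N hN.ne'
  have hconj : ∀ m, conj (ζ ^ m) = (ζ ^ m)⁻¹ := fun m => by
    rw [map_pow, conj_exp_two_pi_I_div, inv_pow]
  have hsqrt : (1 / Real.sqrt N : ℂ) * conj (1 / Real.sqrt N : ℂ) = 1 / N := by
    rw [map_div₀, map_one, conj_ofReal, div_mul_div_comm, one_mul, ← ofReal_mul,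
      Real.mul_self_sqrt (Nat.cast_nonneg N), ofReal_natCast]
  have hij : i = j ↔ i % M = j % M ∧ i / M = j / M :=
    ⟨fun h => h ▸ ⟨rfl, rfl⟩, fun h => (bijOn_mod_div hM N).injOn hi hj (Prod.ext h.1 h.2)⟩
  have hterm : ∀ q, 1 / Real.sqrt N * ζ ^ (i / M * q) * conj (1 / Real.sqrt N * ζ ^ (j / M * q))
      = 1 / N * (ζ ^ (i / M * q) * (ζ ^ (j / M * q))⁻¹) := fun q => by
    rw [map_mul, hconj, mul_mul_mul_comm, hsqrt]
  simp_rw [oddmBasis_eq_ite_pow]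
  rw [sum_range_mul_eq_sum_mod_div hM N (fun r q =>
    (if r = i % M then (1 / Real.sqrt N : ℂ) * ζ ^ (i / M * q) else 0) *
      conj (if r = j % M then (1 / Real.sqrt N : ℂ) * ζ ^ (j / M * q) else 0))]
  simp only [apply_ite conj, map_zero, ite_mul, mul_ite, zero_mul, mul_zero, sum_ite_irrel,
    sum_const_zero, sum_ite_eq', mem_range, Nat.mod_lt _ hM, if_true, hij]
  by_cases hr : i % M = j % M
  · simp only [hr, if_true, true_and, hterm, ← mul_sum,
      hζ.sum_range_pow_mul_inv_pow (Nat.div_lt_of_lt_mul hi) (Nat.div_lt_of_lt_mul hj)]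
    split_ifs <;> simp [hN.ne']
  · simp [hr, Ne.symm hr]

/-- (1) `i ↦ (i mod M, ⌊i/M⌋)` is a bijection from `{0,…,MN−1}` onto
`{0,…,M−1} × {0,…,N−1}`; (2) under this indexing the Zak-OTFS (pulsone) and
ODDM bases coincide pointwise; hence (3) the change-of-basis matrix between
the ODDM and Zak-OTFS bases is the identity (in particular, unitary and
carrier-index-preserving). -/
theorem oddm_zak_identity (M N : ℕ) (hM : 0 < M) (hN : 0 < N) :
    Set.BijOn (fun i : ℕ => (i % M, i / M)) (Set.Iio (M * N))
      (Set.Iio M ×ˢ Set.Iio N) ∧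
    (∀ i n, i < M * N → n < M * N → pulsone M N i n = oddmBasis M N i n) ∧
    (∀ i j, i < M * N → j < M * N →
      ∑ n ∈ Finset.range (M * N),
        oddmBasis M N i n * (starRingEnd ℂ) (pulsone M N j n)
      = if i = j then 1 else 0) := by
  refine ⟨bijOn_mod_div hM N, fun i n _ _ => pulsone_eq_oddmBasis hM N i n, fun i j hi hj => ?_⟩
  simp_rw [pulsone_eq_oddmBasis hM]
  exact sum_oddmBasis_mul_conj_oddmBasis hM hN hi hj
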